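/- arXiv:2312.10128 — 8 statements merged into one kernel-verified Lean document; each statement's English description precedes it below -/
import Mathlib

section
/- If a deterministic program P : G × U → D satisfies unconditional noninterference (i.e., for all g₁ g₂ : G and u : U, P(g₁,u) = P(g₂,u)), and G and U are independent random variables on a finite probability space, then the outcome satisfies demographic parity: for all d : D and g₁ g₂ : G with Pr[G=g₁] > 0 and Pr[G=g₂] > 0, Pr[P(G,U)=d | G=g₁] = Pr[P(G,U)=d | G=g₂]. -/
open Finset
open scoped Classical

/-- Probability of an event under a pmf on a finite sample space. -/
noncomputable def Pr {Ω : Type*} [Fintype Ω] (p : Ω → ℝ) (A : Set Ω) : ℝ :=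
  ∑ ω, if ω ∈ A then p ω else 0

/-- Unconditional noninterference implies demographic parity. -/
theorem stmt0 {Ω 𝒢 𝒰 𝒟 : Type*} [Fintype Ω] [Fintype 𝒢] [Fintype 𝒰] [Fintype 𝒟]
    (p : Ω → ℝ) (hp0 : ∀ ω, 0 ≤ p ω) (hp1 : ∑ ω, p ω = 1)
    (G : Ω → 𝒢) (U : Ω → 𝒰) (P : 𝒢 × 𝒰 → 𝒟)
    (hindep : ∀ (g : 𝒢) (u : 𝒰),
      Pr p {ω | G ω = g ∧ U ω = u} = Pr p {ω | G ω = g} * Pr p {ω | U ω = u})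
    (hni : ∀ (g₁ g₂ : 𝒢) (u : 𝒰), P (g₁, u) = P (g₂, u)) :
    ∀ (d : 𝒟) (g₁ g₂ : 𝒢), 0 < Pr p {ω | G ω = g₁} → 0 < Pr p {ω | G ω = g₂} →
      Pr p {ω | P (G ω, U ω) = d ∧ G ω = g₁} / Pr p {ω | G ω = g₁} =
      Pr p {ω | P (G ω, U ω) = d ∧ G ω = g₂} / Pr p {ω | G ω = g₂} := by
  intro d g₁ g₂ h1 h2
  have key : ∀ g : 𝒢, Pr p {ω | P (G ω, U ω) = d ∧ G ω = g} =
      Pr p {ω | G ω = g} * ∑ u, (if P (g, u) = d then Pr p {ω | U ω = u} else 0) := by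
    intro g
    have step : Pr p {ω | P (G ω, U ω) = d ∧ G ω = g} =
        ∑ u, (if P (g, u) = d then Pr p {ω | G ω = g ∧ U ω = u} else 0) := by
      calc Pr p {ω | P (G ω, U ω) = d ∧ G ω = g}
          = ∑ ω, (if P (G ω, U ω) = d ∧ G ω = g then p ω else 0) := by
            unfold Pr
            exact Finset.sum_congr rfl fun ω _ => by simp only [Set.mem_setOf_eq]
        _ = ∑ ω, ∑ u, (if P (g, u) = d ∧ G ω = g ∧ U ω = u then p ω else 0) := by
            refine Finset.sum_congr rfl fun ω _ => ?_
            rw [Finset.sum_eq_single (U ω)]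
            · by_cases hG : G ω = g
              · subst hG; simp
              · simp [hG]
            · intro b _ hb
              rw [if_neg]
              rintro ⟨-, -, h3⟩
              exact hb h3.symm
            · simp
        _ = ∑ u, ∑ ω, (if P (g, u) = d ∧ G ω = g ∧ U ω = u then p ω else 0) :=
            Finset.sum_comm
        _ = ∑ u, (if P (g, u) = d then Pr p {ω | G ω = g ∧ U ω = u} else 0) := by
            refine Finset.sum_congr rfl fun u _ => ?_
            by_cases h : P (g, u) = d
            · rw [if_pos h]
              unfold Pr
              exact Finset.sum_congr rfl fun ω _ =>
                by simp only [h, Set.mem_setOf_eq, true_and]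
            · simp [h]
    rw [step, Finset.mul_sum]
    apply Finset.sum_congr rfl
    intro u _
    split_ifs with h
    · exact hindep g u
    · ring
  have hsum : (∑ u, (if P (g₁, u) = d then Pr p {ω | U ω = u} else 0)) =
      ∑ u, (if P (g₂, u) = d then Pr p {ω | U ω = u} else 0) := by
    apply Finset.sum_congr rfl
    intro u _
    rw [hni g₁ g₂ u]
  rw [key g₁, key g₂, hsum, mul_comm, mul_comm (Pr p {ω | G ω = g₂}),
    mul_div_assoc, mul_div_assoc, div_self h1.ne', div_self h2.ne']
end

section
/- There exists a finite probability space with G uniform on {A,B}, U uniform on {true,false}, G and U independent, a restricted classification R : G × U → {0,1} with R(A,true)=R(B,false)=0 and R(A,false)=R(B,true)=1, and a program P : G × U → Bool satisfying restricted information flow with respect to R (i.e., R(g₁,u)=R(g₂,u) implies P(g₁,u)=P(g₂,u)), such that conditional demographic parity with respect to the condition R(G,U)=0 fails, i.e., Pr[P(G,U)=true | G=A, R(G,U)=0] ≠ Pr[P(G,U)=true | G=B, R(G,U)=0]. -/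
open Finset
open scoped Classical

/-- Counterexample: restricted information flow does not imply conditional
demographic parity.  Here `𝒢 = Bool` (`false = A`, `true = B`), `𝒰 = Bool`,
the sample space is `Bool × Bool` with `G` and `U` the two projections. -/
theorem stmt2 : ∃ (p : Bool × Bool → ℝ) (R : Bool × Bool → Fin 2) (P : Bool × Bool → Bool),
    (∀ ω, 0 ≤ p ω) ∧ (∑ ω, p ω = 1) ∧
    -- G uniform, U uniform, G and U independent
    (∀ g, Pr p {ω | ω.1 = g} = 1 / 2) ∧
    (∀ u, Pr p {ω | ω.2 = u} = 1 / 2) ∧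
    (∀ g u, Pr p {ω | ω.1 = g ∧ ω.2 = u} = Pr p {ω | ω.1 = g} * Pr p {ω | ω.2 = u}) ∧
    -- the restricted classification
    R (false, true) = 0 ∧ R (true, false) = 0 ∧ R (false, false) = 1 ∧ R (true, true) = 1 ∧
    -- restricted information flow
    (∀ (g₁ g₂ : Bool) (u : Bool), R (g₁, u) = R (g₂, u) → P (g₁, u) = P (g₂, u)) ∧
    -- failure of conditional demographic parity w.r.t. R(G,U) = 0
    Pr p {ω | P ω = true ∧ ω.1 = false ∧ R ω = 0} / Pr p {ω | ω.1 = false ∧ R ω = 0} ≠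
    Pr p {ω | P ω = true ∧ ω.1 = true ∧ R ω = 0} / Pr p {ω | ω.1 = true ∧ R ω = 0} := by
  refine ⟨fun _ => 1/4, fun ω => if ω.1 = ω.2 then 1 else 0,
    fun ω => if ω.1 = ω.2 then !ω.2 else ω.2, ?_, ?_, ?_, ?_, ?_, ?_, ?_, ?_, ?_, ?_, ?_⟩
  · intro ω; norm_num
  · simp [Fintype.sum_prod_type]
  · intro g; cases g <;> simp [Pr, Fintype.sum_prod_type] <;> norm_num
  · intro u; cases u <;> simp [Pr, Fintype.sum_prod_type] <;> norm_num
  · intro g u; cases g <;> cases u <;> simp [Pr, Fintype.sum_prod_type] <;> norm_num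
  · decide
  · decide
  · decide
  · decide
  · decide
  · simp only [Pr, Fintype.sum_prod_type]
    norm_num [Set.mem_setOf_eq]
end

section
/- For a deterministic program P : G × U → D with |D| = 2, independent random variables G and U with G uniformly distributed on the finite set 𝒢, the fairness spread satisfies S(G,U,P) = |𝒢| · V(G | P(G,U), U) − 1, where V is the conditional vulnerability. -/
open Finset
open scoped Classical

/-- Fairness spread for a deterministic binary program:
`S = Σ_u Pr[U=u] · max_{g₁,g₂} (1_{P(g₁,u)=true} − 1_{P(g₂,u)=true})`. -/
noncomputable def spread {𝒢 𝒰 : Type*} [Fintype 𝒢] [Fintype 𝒰] [Nonempty 𝒢]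
    (pU : 𝒰 → ℝ) (P : 𝒢 × 𝒰 → Bool) : ℝ :=
  ∑ u, pU u *
    (Finset.univ.sup' Finset.univ_nonempty fun g₁ =>
      Finset.univ.sup' Finset.univ_nonempty fun g₂ =>
        (if P (g₁, u) = true then (1 : ℝ) else 0) - (if P (g₂, u) = true then (1 : ℝ) else 0))

/-- Conditional vulnerability
`V(G ∣ P(G,U), U) = Σ_u Σ_d max_g Pr[P(G,U)=d, U=u] · Pr[G=g ∣ P(G,U)=d, U=u]`
for independent `G ~ pG`, `U ~ pU` (zero-probability terms count as 0, via `x/0 = 0`). -/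
noncomputable def vuln {𝒢 𝒰 𝒟 : Type*} [Fintype 𝒢] [Fintype 𝒰] [Fintype 𝒟] [Nonempty 𝒢]
    (pG : 𝒢 → ℝ) (pU : 𝒰 → ℝ) (P : 𝒢 × 𝒰 → 𝒟) : ℝ :=
  ∑ u, ∑ d,
    Finset.univ.sup' Finset.univ_nonempty fun g =>
      (∑ g', if P (g', u) = d then pG g' * pU u else 0) *
        ((if P (g, u) = d then pG g * pU u else 0) /
          (∑ g', if P (g', u) = d then pG g' * pU u else 0))

lemma sup'_if_aux {𝒢 : Type*} [Fintype 𝒢] [Nonempty 𝒢] (c : ℝ) (hc : 0 ≤ c)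
    (q : 𝒢 → Prop) [DecidablePred q] :
    (Finset.univ.sup' Finset.univ_nonempty fun g => if q g then c else 0) =
      if ∃ g, q g then c else 0 := by
  by_cases h : ∃ g, q g
  · obtain ⟨g0, hg0⟩ := h
    rw [if_pos ⟨g0, hg0⟩]
    apply le_antisymm
    · exact Finset.sup'_le _ _ fun g _ => by split <;> simp [hc]
    · exact Finset.le_sup'_of_le _ (Finset.mem_univ g0) (by simp [hg0])
  · push_neg at h
    rw [if_neg (by push_neg; exact h)]
    apply le_antisymm
    · exact Finset.sup'_le _ _ fun g _ => by simp [h g]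
    · exact Finset.le_sup'_of_le _ (Finset.mem_univ (Classical.arbitrary 𝒢)) (by simp [h])

lemma doub_aux {𝒢 : Type*} [Fintype 𝒢] [Nonempty 𝒢] (f : 𝒢 → Bool) :
    (Finset.univ.sup' Finset.univ_nonempty fun g₁ =>
      Finset.univ.sup' Finset.univ_nonempty fun g₂ =>
        (if f g₁ = true then (1 : ℝ) else 0) - (if f g₂ = true then (1 : ℝ) else 0)) =
      if (∃ g, f g = true) ∧ (∃ g, f g = false) then 1 else 0 := by
  by_cases h : (∃ g, f g = true) ∧ (∃ g, f g = false)
  · obtain ⟨⟨gt, hgt⟩, ⟨gf, hgf⟩⟩ := h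
    rw [if_pos ⟨⟨gt, hgt⟩, ⟨gf, hgf⟩⟩]
    apply le_antisymm
    · refine Finset.sup'_le _ _ fun g₁ _ => Finset.sup'_le _ _ fun g₂ _ => ?_
      split <;> split <;> norm_num
    · refine Finset.le_sup'_of_le _ (Finset.mem_univ gt) ?_
      refine Finset.le_sup'_of_le _ (Finset.mem_univ gf) ?_
      simp [hgt, hgf]
  · rw [if_neg h]
    have hconst : ∀ g₁ g₂ : 𝒢, (if f g₁ = true then (1 : ℝ) else 0) -
        (if f g₂ = true then (1 : ℝ) else 0) = 0 := by
      rcases not_and_or.mp h with h' | h'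
      · push_neg at h'
        intro g₁ g₂; simp [h' g₁, h' g₂]
      · push_neg at h'
        intro g₁ g₂
        have h1 := h' g₁; have h2 := h' g₂
        cases hb1 : f g₁ <;> cases hb2 : f g₂ <;> simp_all
    have : ∀ g₁ : 𝒢, (Finset.univ.sup' Finset.univ_nonempty fun g₂ =>
        (if f g₁ = true then (1 : ℝ) else 0) - (if f g₂ = true then (1 : ℝ) else 0)) = 0 := by
      intro g₁
      rw [show (fun g₂ => (if f g₁ = true then (1 : ℝ) else 0) -
        (if f g₂ = true then (1 : ℝ) else 0)) = fun _ => (0 : ℝ) from funext fun g₂ => hconst g₁ g₂]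
      exact Finset.sup'_const _ 0
    rw [show (fun g₁ => (Finset.univ.sup' Finset.univ_nonempty fun g₂ =>
        (if f g₁ = true then (1 : ℝ) else 0) - (if f g₂ = true then (1 : ℝ) else 0))) =
        fun _ => (0 : ℝ) from funext this]
    exact Finset.sup'_const _ 0

lemma key_aux {𝒢 : Type*} [Fintype 𝒢] [Nonempty 𝒢] (p : ℝ) (hp : 0 ≤ p) (f : 𝒢 → Bool) :
    p * (Finset.univ.sup' Finset.univ_nonempty fun g₁ =>
      Finset.univ.sup' Finset.univ_nonempty fun g₂ =>
        (if f g₁ = true then (1 : ℝ) else 0) - (if f g₂ = true then (1 : ℝ) else 0)) =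
    (Fintype.card 𝒢 : ℝ) * (∑ d : Bool,
      Finset.univ.sup' Finset.univ_nonempty fun g =>
        (∑ g', if f g' = d then (1 / Fintype.card 𝒢 : ℝ) * p else 0) *
          ((if f g = d then (1 / Fintype.card 𝒢 : ℝ) * p else 0) /
            (∑ g', if f g' = d then (1 / Fintype.card 𝒢 : ℝ) * p else 0))) - p := by
  have hn : (0 : ℝ) < Fintype.card 𝒢 := by
    exact_mod_cast Fintype.card_pos
  set c : ℝ := (1 / Fintype.card 𝒢 : ℝ) * p with hc_def
  have hc : 0 ≤ c := by positivity
  have hexpr : ∀ (d : Bool) (g : 𝒢),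
      (∑ g', if f g' = d then c else 0) *
        ((if f g = d then c else 0) / (∑ g', if f g' = d then c else 0)) =
      if f g = d then c else 0 := by
    intro d g
    by_cases hD : (∑ g', if f g' = d then c else 0) = 0
    · have h0 : (if f g = d then c else 0) = 0 := by
        have := (Finset.sum_eq_zero_iff_of_nonneg
          (fun g' _ => by split <;> simp [hc])).mp hD g (Finset.mem_univ g)
        exact this
      rw [hD, h0]; simp
    · exact mul_div_cancel₀ _ hD
  simp only [hexpr]
  rw [Fintype.sum_bool]
  rw [sup'_if_aux c hc (fun g => f g = false), sup'_if_aux c hc (fun g => f g = true)]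
  rw [doub_aux f]
  have hnc : (Fintype.card 𝒢 : ℝ) * c = p := by
    rw [hc_def]; field_simp
  by_cases ht : ∃ g, f g = true <;> by_cases hf : ∃ g, f g = false
  · rw [if_pos ht, if_pos hf, if_pos ⟨ht, hf⟩]
    rw [mul_add, hnc]; ring
  · rw [if_pos ht, if_neg hf, if_neg (by tauto)]
    rw [mul_add, hnc]; ring
  · rw [if_neg ht, if_pos hf, if_neg (by tauto)]
    rw [mul_add, hnc]; ring
  · exfalso
    rcases Bool.eq_false_or_eq_true (f (Classical.arbitrary 𝒢)) with h | h
    · exact ht ⟨_, h⟩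
    · exact hf ⟨_, h⟩

/-- Conditional vulnerability measures fairness spread:
`S(G,U,P) = |𝒢| · V(G ∣ P(G,U), U) − 1` for uniform `G`. -/
theorem stmt4 {𝒢 𝒰 : Type*} [Fintype 𝒢] [Fintype 𝒰] [Nonempty 𝒢]
    (pU : 𝒰 → ℝ) (hU0 : ∀ u, 0 ≤ pU u) (hU1 : ∑ u, pU u = 1)
    (P : 𝒢 × 𝒰 → Bool) :
    spread pU P =
      (Fintype.card 𝒢 : ℝ) * vuln (fun _ => (1 : ℝ) / Fintype.card 𝒢) pU P - 1 := by
  unfold spread vuln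
  rw [show (∑ u, pU u *
      (Finset.univ.sup' Finset.univ_nonempty fun g₁ =>
        Finset.univ.sup' Finset.univ_nonempty fun g₂ =>
          (if P (g₁, u) = true then (1 : ℝ) else 0) -
            (if P (g₂, u) = true then (1 : ℝ) else 0))) =
      ∑ u, ((Fintype.card 𝒢 : ℝ) * (∑ d : Bool,
        Finset.univ.sup' Finset.univ_nonempty fun g =>
          (∑ g', if P (g', u) = d then (1 / Fintype.card 𝒢 : ℝ) * pU u else 0) *
            ((if P (g, u) = d then (1 / Fintype.card 𝒢 : ℝ) * pU u else 0) /
              (∑ g', if P (g', u) = d then (1 / Fintype.card 𝒢 : ℝ) * pU u else 0))) - pU u)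
    from Finset.sum_congr rfl fun u _ => key_aux (pU u) (hU0 u) (fun g => P (g, u))]
  rw [Finset.sum_sub_distrib, hU1, ← Finset.mul_sum]
  congr!
end

section
/- For a deterministic program P : G × U → D, with G uniformly distributed on the finite set 𝒢 and U uniformly distributed on the finite set 𝒰, and G, U independent, the conditional vulnerability equals |{(u,d) ∈ 𝒰 × 𝒟 : ∃ g ∈ 𝒢, P(g,u) = d}| / (|𝒰| · |𝒢|). -/
open Finset
open scoped Classical

/-! For independent `G`, `U` with nonnegative weights, the vulnerability is the sum over `(u, d)`
of the largest joint weight `Pr[G = g, P(G,U) = d, U = u]`: multiplying the posterior by the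
evidence gives back the joint weight, also when the evidence vanishes. For uniform `G` and `U`
every joint weight is `0` or `1 / (|𝒰| |𝒢|)`, and the maximum is the latter exactly when `d` is
an output of `P (·, u)`. -/

theorem Finset.sum_mul_div_sum_of_nonneg {ι α : Type*} [Semifield α] [LinearOrder α]
    [IsStrictOrderedRing α] {s : Finset ι} {f : ι → α}
    (hf : ∀ j ∈ s, 0 ≤ f j) {i : ι} (hi : i ∈ s) :
    (∑ j ∈ s, f j) * (f i / ∑ j ∈ s, f j) = f i := by
  by_cases hS : ∑ j ∈ s, f j = 0
  · rw [hS, zero_mul, ((Finset.sum_eq_zero_iff_of_nonneg hf).mp hS i hi)]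
  · exact mul_div_cancel₀ _ hS

theorem Finset.sup'_ite_const {ι α : Type*} [SemilatticeSup α] [Zero α] {s : Finset ι}
    (hs : s.Nonempty) (p : ι → Prop) {c : α} (hc : 0 ≤ c) :
    s.sup' hs (fun i => if p i then c else 0) = if ∃ i ∈ s, p i then c else 0 := by
  apply le_antisymm
  · refine Finset.sup'_le _ _ fun i hi => ?_
    split_ifs with hpi hex hex
    · rfl
    · exact absurd ⟨i, hi, hpi⟩ hex
    · exact hc
    · rfl
  · split_ifs with hex
    · obtain ⟨i, hi, hpi⟩ := hex
      exact (if_pos hpi).symm.le.trans (Finset.le_sup' (fun i => if p i then c else 0) hi)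
    · obtain ⟨i, hi⟩ := hs
      exact (if_neg fun hpi => hex ⟨i, hi, hpi⟩).symm.le.trans
        (Finset.le_sup' (fun i => if p i then c else 0) hi)

theorem vuln_eq_sum_sup' {𝒢 𝒰 𝒟 : Type*} [Fintype 𝒢] [Fintype 𝒰] [Fintype 𝒟] [Nonempty 𝒢]
    {pG : 𝒢 → ℝ} {pU : 𝒰 → ℝ} (hG : ∀ g, 0 ≤ pG g) (hU : ∀ u, 0 ≤ pU u) (P : 𝒢 × 𝒰 → 𝒟) :
    vuln pG pU P = ∑ u, ∑ d, Finset.univ.sup' Finset.univ_nonempty fun g =>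
      if P (g, u) = d then pG g * pU u else 0 := by
  refine Finset.sum_congr rfl fun u _ => Finset.sum_congr rfl fun d _ => ?_
  refine Finset.sup'_congr _ rfl fun g hg => Finset.sum_mul_div_sum_of_nonneg (fun g' _ => ?_) hg
  split_ifs
  exacts [mul_nonneg (hG g') (hU u), le_rfl]

theorem stmt5_general {𝒢 𝒰 𝒟 : Type*} [Fintype 𝒢] [Fintype 𝒰] [Fintype 𝒟] [Nonempty 𝒢]
    (P : 𝒢 × 𝒰 → 𝒟) :
    vuln (fun _ => (1 : ℝ) / Fintype.card 𝒢) (fun _ => (1 : ℝ) / Fintype.card 𝒰) P =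
      ((Finset.univ.filter fun ud : 𝒰 × 𝒟 => ∃ g, P (g, ud.1) = ud.2).card : ℝ) /
        (Fintype.card 𝒰 * Fintype.card 𝒢) := by
  have hc : (0 : ℝ) ≤ 1 / Fintype.card 𝒢 * (1 / Fintype.card 𝒰) := by positivity
  rw [vuln_eq_sum_sup' (fun _ => by positivity) (fun _ => by positivity)]
  simp only [Finset.sup'_ite_const _ _ hc, Finset.mem_univ, true_and]
  rw [← Fintype.sum_prod_type', Finset.sum_ite, Finset.sum_const_zero,
    Finset.sum_const, add_zero, nsmul_eq_mul]
  ring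

/-- Computation of conditional vulnerability through counting, for uniform
independent `G` and `U`. -/
theorem stmt5 {𝒢 𝒰 𝒟 : Type*} [Fintype 𝒢] [Fintype 𝒰] [Fintype 𝒟] [Nonempty 𝒢] [Nonempty 𝒰]
    (P : 𝒢 × 𝒰 → 𝒟) :
    vuln (fun _ => (1 : ℝ) / Fintype.card 𝒢) (fun _ => (1 : ℝ) / Fintype.card 𝒰) P =
      ((Finset.univ.filter fun ud : 𝒰 × 𝒟 => ∃ g, P (g, ud.1) = ud.2).card : ℝ) /
        (Fintype.card 𝒰 * Fintype.card 𝒢) :=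
  stmt5_general P
end

section
/- Let 𝒢 = {0,1} and 𝒰 = {0} and suppose Pr[G=1] = μ₁ with the (possibly randomized) program's output D ∈ {0,1} satisfying min_{d∈{0,1}} Pr[P(1,0)=d] ≥ (1−μ₁)/μ₁. Then the conditional vulnerability V(G | P(G,0)) = max_g (Pr[G=g]·Pr[P(g,0)=0]) + max_g (Pr[G=g]·Pr[P(g,0)=1]) equals μ₁, independently of the behavior of P on group 0. -/
/-- For `𝒢 = {0,1}`, `Pr[G=1] = μ₁`, a randomized binary program with output
distributions `r = Pr[P(0,0)=·]` and `q = Pr[P(1,0)=·]` satisfying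
`min (q 0) (q 1) ≥ (1−μ₁)/μ₁`, the conditional vulnerability
`V = max_g (Pr[G=g]·Pr[P(g,0)=0]) + max_g (Pr[G=g]·Pr[P(g,0)=1])`
equals `μ₁`, independently of `r`. -/
theorem stmt8 (μ₁ : ℝ) (hμlb : 1 / 2 < μ₁) (hμub : μ₁ ≤ 1)
    (q r : Fin 2 → ℝ)
    (hq0 : ∀ d, 0 ≤ q d) (hr0 : ∀ d, 0 ≤ r d)
    (hq1 : q 0 + q 1 = 1) (hr1 : r 0 + r 1 = 1)
    (hmin : (1 - μ₁) / μ₁ ≤ min (q 0) (q 1)) :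
    max ((1 - μ₁) * r 0) (μ₁ * q 0) + max ((1 - μ₁) * r 1) (μ₁ * q 1) = μ₁ := by
  have hμpos : 0 < μ₁ := by linarith
  have h1 : 1 - μ₁ ≤ μ₁ * q 0 := by
    have := (div_le_iff₀ hμpos).mp (le_trans hmin (min_le_left _ _))
    linarith
  have h2 : 1 - μ₁ ≤ μ₁ * q 1 := by
    have := (div_le_iff₀ hμpos).mp (le_trans hmin (min_le_right _ _))
    linarith
  have hr0' : r 0 ≤ 1 := by have := hr0 1; linarith
  have hr1' : r 1 ≤ 1 := by have := hr0 0; linarith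
  have e0 : max ((1 - μ₁) * r 0) (μ₁ * q 0) = μ₁ * q 0 := by
    apply max_eq_right; nlinarith [hr0 0]
  have e1 : max ((1 - μ₁) * r 1) (μ₁ * q 1) = μ₁ * q 1 := by
    apply max_eq_right; nlinarith [hr0 1]
  rw [e0, e1]; nlinarith
end

section
/- Let P : 𝒢 × 𝒰 → Bool be a deterministic binary program and let Ĉ be a causal model with finite background variable space ℬ with a pmf, computing (G,U) = C(b) from b ∈ ℬ; define P̂(b) = P(C(b)) and P̂(g,b) = P(g, U-component of C under intervention G←g on input b). Then P is counterfactually fair with respect to C if and only if S(G, B, P̂) = 0, where S is the fairness spread computed treating B as the unprotected input and g ↦ P̂(g,·) : 𝒢 × ℬ → Bool as the program. -/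
open Finset
open scoped Classical

private lemma spread_nonneg {𝒢 : Type*} [Fintype 𝒢] [Nonempty 𝒢] (f : 𝒢 → ℝ) :
    0 ≤ Finset.univ.sup' Finset.univ_nonempty (fun g₁ =>
      Finset.univ.sup' Finset.univ_nonempty (fun g₂ => f g₁ - f g₂)) := by
  obtain ⟨g⟩ := ‹Nonempty 𝒢›
  have h1 : f g - f g ≤ Finset.univ.sup' Finset.univ_nonempty (fun g₂ => f g - f g₂) :=
    Finset.le_sup' (fun g₂ => f g - f g₂) (Finset.mem_univ g)
  have h2 : Finset.univ.sup' Finset.univ_nonempty (fun g₂ => f g - f g₂) ≤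
      Finset.univ.sup' Finset.univ_nonempty (fun g₁ =>
        Finset.univ.sup' Finset.univ_nonempty (fun g₂ => f g₁ - f g₂)) :=
    Finset.le_sup' (fun g₁ => Finset.univ.sup' Finset.univ_nonempty (fun g₂ => f g₁ - f g₂))
      (Finset.mem_univ g)
  linarith

private lemma spread_le {𝒢 : Type*} [Fintype 𝒢] [Nonempty 𝒢] (f : 𝒢 → ℝ) (ga gb : 𝒢) :
    f ga - f gb ≤ Finset.univ.sup' Finset.univ_nonempty (fun g₁ =>
      Finset.univ.sup' Finset.univ_nonempty (fun g₂ => f g₁ - f g₂)) :=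
  le_trans (Finset.le_sup' (fun g₂ => f ga - f g₂) (Finset.mem_univ gb))
    (Finset.le_sup' (fun g₁ => Finset.univ.sup' Finset.univ_nonempty
      (fun g₂ => f g₁ - f g₂)) (Finset.mem_univ ga))

/-- Coincidence of fairness spread and counterfactual fairness.
`C : ℬ → 𝒢 × 𝒰` is the causal model, `Cint g b` is the `U`-component of the
model under intervention `G ← g` (consistent with the factual model), and
`P̂(g,b) = P (g, Cint g b)`.  Counterfactual fairness (left) holds iff the
fairness spread of `P̂` with `B` as unprotected input (right) is zero. -/
theorem stmt9 {𝒢 𝒰 ℬ : Type*} [Fintype 𝒢] [Fintype 𝒰] [Fintype ℬ] [Nonempty 𝒢]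
    (pB : ℬ → ℝ) (hpos : ∀ b, 0 < pB b) (hsum : ∑ b, pB b = 1)
    (C : ℬ → 𝒢 × 𝒰) (Cint : 𝒢 → ℬ → 𝒰)
    (hcons : ∀ b, Cint (C b).1 b = (C b).2)
    (P : 𝒢 × 𝒰 → Bool) :
    (∀ (g₁ g₂ : 𝒢) (u : 𝒰) (d : Bool),
        (∑ b, if C b = (g₁, u) ∧ P (g₁, Cint g₁ b) = d then pB b else 0) /
          (∑ b, if C b = (g₁, u) then pB b else 0) =
        (∑ b, if C b = (g₁, u) ∧ P (g₂, Cint g₂ b) = d then pB b else 0) /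
          (∑ b, if C b = (g₁, u) then pB b else 0)) ↔
    (∑ b, pB b *
        (Finset.univ.sup' Finset.univ_nonempty fun g₁ =>
          Finset.univ.sup' Finset.univ_nonempty fun g₂ =>
            (if P (g₁, Cint g₁ b) = true then (1 : ℝ) else 0) -
              (if P (g₂, Cint g₂ b) = true then (1 : ℝ) else 0))) = 0 := by
  constructor
  · intro h
    have key : ∀ b (g : 𝒢), P (g, Cint g b) = P (C b) := by
      intro b g
      by_contra hne
      set g₁ := (C b).1 with hg1
      set u := (C b).2 with hu
      have hCb : C b = (g₁, u) := rfl
      set d := P (C b) with hd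
      have hterm : ∀ b', (0:ℝ) ≤ if C b' = (g₁, u) then pB b' else 0 := by
        intro b'; split
        · exact (hpos b').le
        · exact le_refl 0
      have hD : (0:ℝ) < ∑ b', if C b' = (g₁, u) then pB b' else 0 := by
        apply Finset.sum_pos' (fun i _ => hterm i)
        exact ⟨b, Finset.mem_univ b, by simp [hCb, (hpos b)]⟩
      have hnum1 : (∑ b', if C b' = (g₁, u) ∧ P (g₁, Cint g₁ b') = d then pB b' else 0)
          = ∑ b', if C b' = (g₁, u) then pB b' else 0 := by
        apply Finset.sum_congr rfl
        intro b' _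
        by_cases hb' : C b' = (g₁, u)
        · have h1 : (C b').1 = g₁ := by rw [hb']
          have h2 : Cint g₁ b' = (C b').2 := by rw [← h1]; exact hcons b'
          have h3 : P (g₁, Cint g₁ b') = d := by
            rw [h2]
            have h4 : ((g₁ : 𝒢), (C b').2) = C b' := by rw [← h1]
            rw [h4, hb', hd, hCb]
          simp [hb', h3]
        · simp [hb']
      have heq := h g₁ g u d
      have hNeq : (∑ b', if C b' = (g₁, u) ∧ P (g₁, Cint g₁ b') = d then pB b' else 0)
          = ∑ b', if C b' = (g₁, u) ∧ P (g, Cint g b') = d then pB b' else 0 := by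
        have := (div_eq_div_iff hD.ne' hD.ne').mp heq
        exact mul_right_cancel₀ hD.ne' this
      have hlt : (∑ b', if C b' = (g₁, u) ∧ P (g, Cint g b') = d then pB b' else 0)
          < ∑ b', if C b' = (g₁, u) then pB b' else 0 := by
        apply Finset.sum_lt_sum
        · intro i _
          by_cases hi : C i = (g₁, u) ∧ P (g, Cint g i) = d
          · simp [hi, hi.1]
          · simp only [hi, if_false]; exact hterm i
        · refine ⟨b, Finset.mem_univ b, ?_⟩
          have hnc : ¬ (C b = (g₁, u) ∧ P (g, Cint g b) = d) := fun hc => hne hc.2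
          rw [if_neg hnc, if_pos hCb]
          exact hpos b
      rw [hnum1] at hNeq
      exact absurd hNeq (ne_of_gt (hNeq ▸ hlt)).symm
    apply Finset.sum_eq_zero
    intro b _
    have hz : (Finset.univ.sup' Finset.univ_nonempty fun g₁ =>
          Finset.univ.sup' Finset.univ_nonempty fun g₂ =>
            (if P (g₁, Cint g₁ b) = true then (1 : ℝ) else 0) -
              (if P (g₂, Cint g₂ b) = true then (1 : ℝ) else 0)) = 0 := by
      apply le_antisymm
      · apply Finset.sup'_le
        intro g₁ _
        apply Finset.sup'_le
        intro g₂ _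
        rw [key b g₁, key b g₂]
        simp
      · exact spread_nonneg (fun g => if P (g, Cint g b) = true then (1 : ℝ) else 0)
    rw [hz, mul_zero]
  · intro h g₁ g₂ u d
    have key : ∀ b (ga gb : 𝒢), P (ga, Cint ga b) = P (gb, Cint gb b) := by
      intro b ga gb
      have hnn : ∀ b' : ℬ, (0:ℝ) ≤ pB b' *
          (Finset.univ.sup' Finset.univ_nonempty fun ga =>
            Finset.univ.sup' Finset.univ_nonempty fun gb =>
              (if P (ga, Cint ga b') = true then (1 : ℝ) else 0) -
                (if P (gb, Cint gb b') = true then (1 : ℝ) else 0)) := fun b' =>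
        mul_nonneg (hpos b').le
          (spread_nonneg (fun g => if P (g, Cint g b') = true then (1 : ℝ) else 0))
      have hb0 := (Finset.sum_eq_zero_iff_of_nonneg (fun i _ => hnn i)).mp h b
          (Finset.mem_univ b)
      have hS : (Finset.univ.sup' Finset.univ_nonempty fun ga =>
            Finset.univ.sup' Finset.univ_nonempty fun gb =>
              (if P (ga, Cint ga b) = true then (1 : ℝ) else 0) -
                (if P (gb, Cint gb b) = true then (1 : ℝ) else 0)) = 0 := by
        rcases mul_eq_zero.mp hb0 with h1 | h1
        · exact absurd h1 (hpos b).ne'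
        · exact h1
      have hle : (if P (ga, Cint ga b) = true then (1 : ℝ) else 0) -
            (if P (gb, Cint gb b) = true then (1 : ℝ) else 0) ≤ 0 := by
        have := spread_le (fun g => if P (g, Cint g b) = true then (1 : ℝ) else 0) ga gb
        rw [hS] at this; exact this
      have hle' : (if P (gb, Cint gb b) = true then (1 : ℝ) else 0) -
            (if P (ga, Cint ga b) = true then (1 : ℝ) else 0) ≤ 0 := by
        have := spread_le (fun g => if P (g, Cint g b) = true then (1 : ℝ) else 0) gb ga
        rw [hS] at this; exact this
      by_cases h1 : P (ga, Cint ga b) = true <;> by_cases h2 : P (gb, Cint gb b) = true <;>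
        simp [h1, h2] at hle hle' ⊢ <;> simp_all <;> linarith
    congr 1
    apply Finset.sum_congr rfl
    intro b _
    rw [key b g₁ g₂]
end

section
/- The program P : 𝒢 × 𝒰 → Bool with 𝒢 = {1,2}, 𝒰 = {1,2}, P(g,u) = true iff g = u, with G, U independent and uniform, satisfies demographic parity (Pr[P(G,U)=true | G=1] = Pr[P(G,U)=true | G=2] = 1/2) but does not satisfy unconditional noninterference, and its fairness spread equals 1. -/
open Finset
open scoped Classical

/-- `P(g,u) = true` iff `g = u`, on the two-element group/attribute sets. -/
def P13 : Fin 2 × Fin 2 → Bool := fun x => decide (x.1 = x.2)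

/-- `P13` satisfies demographic parity (both group-conditional acceptance
probabilities are `1/2` under uniform independent `G`, `U`), does not satisfy
unconditional noninterference, and has fairness spread `1`. -/
theorem stmt13 :
    (∀ g : Fin 2,
      (∑ u : Fin 2, if P13 (g, u) = true then (1 : ℝ) / 2 * (1 / 2) else 0) / (1 / 2)
        = 1 / 2) ∧
    ¬ (∀ (g₁ g₂ : Fin 2) (u : Fin 2), P13 (g₁, u) = P13 (g₂, u)) ∧
    spread (fun _ => (1 : ℝ) / 2) P13 = 1 := by
  refine ⟨?_, ?_, ?_⟩
  · intro g
    fin_cases g <;> simp [Fin.sum_univ_two, P13] <;> norm_num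
  · intro h
    have := h 0 1 0
    simp [P13] at this
  · unfold spread
    rw [Fin.sum_univ_two]
    have h : ∀ u : Fin 2,
        (Finset.univ.sup' Finset.univ_nonempty fun g₁ : Fin 2 =>
          Finset.univ.sup' Finset.univ_nonempty fun g₂ : Fin 2 =>
            (if P13 (g₁, u) = true then (1 : ℝ) else 0) -
              (if P13 (g₂, u) = true then (1 : ℝ) else 0)) = 1 := by
      intro u
      apply le_antisymm
      · apply Finset.sup'_le; intro g₁ _
        apply Finset.sup'_le; intro g₂ _
        fin_cases g₁ <;> fin_cases g₂ <;> fin_cases u <;> simp [P13] <;> norm_num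
      · fin_cases u
        · refine le_trans ?_ (Finset.le_sup' _ (Finset.mem_univ (0 : Fin 2)))
          refine le_trans ?_ (Finset.le_sup' _ (Finset.mem_univ (1 : Fin 2)))
          simp [P13]
        · refine le_trans ?_ (Finset.le_sup' _ (Finset.mem_univ (1 : Fin 2)))
          refine le_trans ?_ (Finset.le_sup' _ (Finset.mem_univ (0 : Fin 2)))
          simp [P13]
    rw [h 0, h 1]; norm_num
end

section
/- If P : 𝒢 × 𝒰 → D satisfies unconditional noninterference, then with G uniform on 𝒢 and U arbitrary, independent, the conditional vulnerability attains its minimum: V(G | P(G,U), U) = 1/|𝒢|. -/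
open Finset
open scoped Classical

/-- Unconditional noninterference makes the conditional vulnerability attain
its minimum `1/|𝒢|` (with `G` uniform and `U` an independent arbitrary pmf). -/
theorem stmt16 {𝒢 𝒰 𝒟 : Type*} [Fintype 𝒢] [Fintype 𝒰] [Fintype 𝒟] [Nonempty 𝒢]
    (pU : 𝒰 → ℝ) (hU0 : ∀ u, 0 ≤ pU u) (hU1 : ∑ u, pU u = 1)
    (P : 𝒢 × 𝒰 → 𝒟)
    (hni : ∀ (g₁ g₂ : 𝒢) (u : 𝒰), P (g₁, u) = P (g₂, u)) :
    vuln (fun _ => (1 : ℝ) / Fintype.card 𝒢) pU P = 1 / Fintype.card 𝒢 := by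
  classical
  obtain ⟨g₀⟩ := ‹Nonempty 𝒢›
  set c : ℝ := 1 / Fintype.card 𝒢 with hc
  have hcard : (Fintype.card 𝒢 : ℝ) ≠ 0 := by
    exact_mod_cast Fintype.card_ne_zero
  unfold vuln
  have key : ∀ (u : 𝒰) (d : 𝒟), (Finset.univ.sup' Finset.univ_nonempty fun g =>
      (∑ g', if P (g', u) = d then c * pU u else 0) *
        ((if P (g, u) = d then c * pU u else 0) /
          (∑ g', if P (g', u) = d then c * pU u else 0)))
      = if P (g₀, u) = d then c * pU u else 0 := by
    intro u d
    have hP : ∀ g : 𝒢, P (g, u) = P (g₀, u) := fun g => hni g g₀ u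
    have hS : (∑ g' : 𝒢, if P (g', u) = d then c * pU u else 0)
        = (Fintype.card 𝒢 : ℝ) * (if P (g₀, u) = d then c * pU u else 0) := by
      simp only [hP, Finset.sum_const, Finset.card_univ, nsmul_eq_mul]
    simp only [hP, hS, Finset.sup'_const]
    set t : ℝ := if P (g₀, u) = d then c * pU u else 0 with ht
    rcases eq_or_ne t 0 with h0 | h0
    · simp [h0]
    · rw [Finset.sum_const, Finset.card_univ, nsmul_eq_mul]
      have hne : (Fintype.card 𝒢 : ℝ) * t ≠ 0 := mul_ne_zero hcard h0
      field_simp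
  calc (∑ u, ∑ d,
      Finset.univ.sup' Finset.univ_nonempty fun g =>
        (∑ g', if P (g', u) = d then (fun _ : 𝒢 => c) g' * pU u else 0) *
          ((if P (g, u) = d then (fun _ : 𝒢 => c) g * pU u else 0) /
            (∑ g', if P (g', u) = d then (fun _ : 𝒢 => c) g' * pU u else 0)))
      = ∑ u, ∑ d, (if P (g₀, u) = d then c * pU u else 0) := by
        refine Finset.sum_congr rfl fun u _ => Finset.sum_congr rfl fun d _ => ?_
        exact key u d
    _ = ∑ u, c * pU u := by
        refine Finset.sum_congr rfl fun u _ => ?_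
        simp
    _ = c := by rw [← Finset.mul_sum, hU1, mul_one]
end
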